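/- For 0 < α < 2 and q > 0, one has 1 + g_{qα/(2(2-α))}(q/2) ≤ c_α, where c_α = 1 + max(1, (1+2e)α/(2(2-α))) and g_c(x) is the unique positive solution in y of y - (y+c)·log(1 + y/c) = log(x). -/

import Mathlib

open Real

private lemma log_one_add_two_e' : 1 + Real.log 2 ≤ Real.log (1 + 2 * Real.exp 1) := by
  have h2e : Real.log (2 * Real.exp 1) = Real.log 2 + 1 := by
    rw [Real.log_mul (by norm_num) (Real.exp_ne_zero 1), Real.log_exp]
  have h : Real.log (2 * Real.exp 1) ≤ Real.log (1 + 2 * Real.exp 1) := by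
    apply Real.log_le_log (by positivity)
    linarith
  linarith

private lemma F_strictAnti' (c : ℝ) (hc : 0 < c) :
    StrictAntiOn (fun t => t - (t + c) * Real.log (1 + t / c)) (Set.Ici 0) := by
  apply strictAntiOn_of_deriv_neg (convex_Ici 0)
  · apply ContinuousOn.sub continuousOn_id
    apply ContinuousOn.mul (by fun_prop)
    apply ContinuousOn.log (by fun_prop)
    intro x hx
    have hx0 : (0:ℝ) ≤ x := hx
    positivity
  · intro x hx
    rw [interior_Ici] at hx
    have hx0 : 0 < x := hx
    have h1 : (0:ℝ) < 1 + x / c := by positivity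
    have hd : HasDerivAt (fun t => t - (t + c) * Real.log (1 + t / c))
        (-Real.log (1 + x / c)) x := by
      have hlog : HasDerivAt (fun t => Real.log (1 + t / c)) ((1/c) / (1 + x/c)) x := by
        have h' : HasDerivAt (fun t : ℝ => 1 + t / c) (1/c) x := by
          simpa using ((hasDerivAt_id x).div_const c).const_add 1
        exact h'.log (ne_of_gt h1)
      have hmul : HasDerivAt (fun t => (t + c) * Real.log (1 + t / c))
          (1 * Real.log (1 + x/c) + (x + c) * ((1/c)/(1+x/c))) x :=
        ((hasDerivAt_id x).add_const c).mul hlog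
      have h2 : HasDerivAt (fun t => t - (t + c) * Real.log (1 + t / c))
          (1 - (1 * Real.log (1 + x/c) + (x + c) * ((1/c)/(1+x/c)))) x := (hasDerivAt_id x).sub hmul
      convert h2 using 1
      have h3 : (x + c) * ((1/c)/(1+x/c)) = 1 := by
        field_simp
        ring
      rw [h3]; ring
    rw [hd.deriv]
    have h4 : 1 < 1 + x / c := by
      have : 0 < x / c := by positivity
      linarith
    have := Real.log_pos h4
    linarith

private lemma key' (c q : ℝ) (hc : 0 < c) (hq : 0 < q) (hq2 : q < 2) :
    (max 1 ((1 + 2 * Real.exp 1) * c / q)) -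
      ((max 1 ((1 + 2 * Real.exp 1) * c / q)) + c) *
        Real.log (1 + (max 1 ((1 + 2 * Real.exp 1) * c / q)) / c) ≤ Real.log (q / 2) := by
  have he : (2:ℝ) < 2 * Real.exp 1 := by nlinarith [Real.exp_one_gt_d9]
  have hE : (0:ℝ) < 1 + 2 * Real.exp 1 := by linarith
  rcases le_total ((1 + 2 * Real.exp 1) * c / q) 1 with hM | hM
  · rw [max_eq_left hM]
    -- M ≤ 1 : (1+2e) c ≤ q
    have hcq : (1 + 2 * Real.exp 1) * c ≤ q := by
      rw [div_le_one hq] at hM; linarith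
    have hc1 : c < 1 := by nlinarith
    have hlog1 : Real.log (1 + 1 / c) = Real.log (1 + c) - Real.log c := by
      have h : 1 + 1 / c = (1 + c) / c := by field_simp; ring
      rw [h, Real.log_div (by positivity) (ne_of_gt hc)]
    rw [hlog1]
    have hlq : Real.log (1 + 2 * Real.exp 1) + Real.log c - Real.log 2 ≤ Real.log (q/2) := by
      have h1 : Real.log ((1 + 2 * Real.exp 1) * c / 2) ≤ Real.log (q / 2) := by
        apply Real.log_le_log (by positivity)
        linarith
      rw [Real.log_div (by positivity) (by norm_num),
        Real.log_mul (ne_of_gt hE) (ne_of_gt hc)] at h1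
      linarith
    have hlc : Real.log c ≤ 0 := Real.log_nonpos (le_of_lt hc) (le_of_lt hc1)
    have hl1c : 0 ≤ Real.log (1 + c) := Real.log_nonneg (by linarith)
    have hE2 := log_one_add_two_e'
    nlinarith [mul_nonneg (le_of_lt hc) (neg_nonneg.mpr hlc),
      mul_nonneg (le_of_lt hc) hl1c]
  · rw [max_eq_right hM]
    set s : ℝ := (1 + 2 * Real.exp 1) / q with hs_def
    have hs0 : 0 < s := by positivity
    have hs1 : 1 < s := by
      rw [hs_def, lt_div_iff₀ hq]; linarith
    have hMcs : (1 + 2 * Real.exp 1) * c / q = c * s := by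
      rw [hs_def]; ring
    have hqs : q * s = 1 + 2 * Real.exp 1 := by
      rw [hs_def]; field_simp
    rw [hMcs]
    have hMc : c * s / c = s := by field_simp
    rw [hMc]
    set L : ℝ := Real.log (1 + s) with hL_def
    have hL0 : 0 ≤ L := Real.log_nonneg (by linarith)
    have hA : 1 ≤ c * s := by rw [← hMcs]; exact hM
    have hB : s ≤ (s + 1) * L := by
      -- log(1+s) ≥ s/(1+s)
      have h := Real.log_le_sub_one_of_pos (show (0:ℝ) < 1/(1+s) by positivity)
      rw [Real.log_div (by norm_num) (by positivity), Real.log_one] at h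
      have h2 : (0:ℝ) < 1 + s := by linarith
      have h3 : (1 + s) * (1 / (1 + s)) = 1 := by field_simp
      rw [hL_def]
      nlinarith [mul_le_mul_of_nonneg_left h h2.le, h3]
    have hC : Real.log s ≤ L := by
      rw [hL_def]; exact Real.log_le_log hs0 (by linarith)
    have hD : Real.log (q / 2) = Real.log (1 + 2 * Real.exp 1) - Real.log 2 - Real.log s := by
      have hlq : Real.log q + Real.log s = Real.log (1 + 2 * Real.exp 1) := by
        rw [← Real.log_mul (ne_of_gt hq) (ne_of_gt hs0), hqs]
      rw [Real.log_div (ne_of_gt hq) (by norm_num)]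
      linarith
    have hE2 := log_one_add_two_e'
    -- want: c*s - (c*s + c)*L ≤ log(q/2). Multiply by s.
    have key : s * (c * s - (c * s + c) * L) ≤ s * Real.log (q / 2) := by
      have h1 : s * (c * s - (c * s + c) * L) ≤ s - (s + 1) * L := by
        nlinarith [mul_nonneg (sub_nonneg.mpr hA) (sub_nonneg.mpr hB)]
      have h2 : s - (s + 1) * L ≤ s * (1 - Real.log s) := by
        nlinarith [mul_le_mul_of_nonneg_left hC (le_of_lt hs0)]
      have h3 : s * (1 - Real.log s) ≤ s * Real.log (q / 2) := by
        apply mul_le_mul_of_nonneg_left _ (le_of_lt hs0)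
        rw [hD]; linarith
      linarith
    exact le_of_mul_le_mul_left key hs0

/-- For `0 < α < 2` and `q > 0`, one has `1 + g_{qα/(2(2-α))}(q/2) ≤ c_α`, where
`c_α = 1 + max (1, (1+2e)α/(2(2-α)))` and `g_c(x)` is the unique positive solution
in `y` of `y - (y+c)·log(1+y/c) = log x`.  (Quantified over any positive solution.) -/
theorem one_add_g_le_c_alpha (α q : ℝ) (hα0 : 0 < α) (hα2 : α < 2) (hq : 0 < q)
    (y : ℝ) (hy : 0 < y)
    (hsol : y - (y + q * α / (2 * (2 - α))) *
        Real.log (1 + y / (q * α / (2 * (2 - α)))) = Real.log (q / 2)) :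
    1 + y ≤ 1 + max 1 ((1 + 2 * Real.exp 1) * α / (2 * (2 - α))) := by
  have h2α : 0 < 2 - α := by linarith
  set c : ℝ := q * α / (2 * (2 - α)) with hc_def
  have hc : 0 < c := by positivity
  have hanti := F_strictAnti' c hc
  -- q < 2
  have hF0 : (fun t => t - (t + c) * Real.log (1 + t / c)) 0 = 0 := by
    simp
  have hq2 : q < 2 := by
    have h := hanti (Set.self_mem_Ici) (Set.mem_Ici.mpr hy.le) hy
    rw [hF0] at h
    simp only at h
    rw [hsol] at h
    have := (Real.log_neg_iff (by positivity)).mp h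
    linarith
  -- rewrite max arg
  have hMeq : (1 + 2 * Real.exp 1) * α / (2 * (2 - α)) = (1 + 2 * Real.exp 1) * c / q := by
    rw [hc_def]; field_simp
  rw [hMeq]
  have hkey := key' c q hc hq hq2
  set M : ℝ := max 1 ((1 + 2 * Real.exp 1) * c / q) with hM_def
  have hM1 : (1:ℝ) ≤ M := le_max_left _ _
  by_contra hcon
  push_neg at hcon
  have hyM : M < y := by linarith
  have h := hanti (Set.mem_Ici.mpr (by linarith : (0:ℝ) ≤ M)) (Set.mem_Ici.mpr hy.le) hyM
  simp only at h
  rw [hsol] at h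
  linarith
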